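/- arXiv:1305.5955 — 3 statements merged into one kernel-verified Lean document; each statement's English description precedes it below -/
import Mathlib

section
/- Let (G,p) be an r-dimensional tensegrity framework on n vertices in ℝ^r with r ≤ n−2. Suppose (1) there exists a proper positive semidefinite stress matrix Ω of (G,p) of rank n−r−1, and (2) there does not exist a tensegrity framework (G,q) in ℝ^r that is affinely-dominated by, but not congruent to, (G,p). Then (G,p) is universally rigid. -/
open Matrix BigOperators

noncomputable section

/-- Squared Euclidean distance between two points of `ℝ^r`. -/
def sqDist {r : ℕ} (x y : Fin r → ℝ) : ℝ := ∑ k, (x k - y k) ^ 2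

/-- `(G,q)` is dominated by `(G,p)`, where the edges of `G` are partitioned into
bars `B`, cables `C` and struts `S`. -/
def Dominates {n r s : ℕ} (B C S : Set (Fin n × Fin n))
    (p : Fin n → Fin r → ℝ) (q : Fin n → Fin s → ℝ) : Prop :=
  (∀ e ∈ B, sqDist (q e.1) (q e.2) = sqDist (p e.1) (p e.2)) ∧
  (∀ e ∈ C, sqDist (q e.1) (q e.2) ≤ sqDist (p e.1) (p e.2)) ∧
  (∀ e ∈ S, sqDist (p e.1) (p e.2) ≤ sqDist (q e.1) (q e.2))

/-- `(G,q)` is congruent to `(G,p)`. -/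
def FrameworkCongruent {n r s : ℕ} (p : Fin n → Fin r → ℝ) (q : Fin n → Fin s → ℝ) : Prop :=
  ∀ i j, sqDist (q i) (q j) = sqDist (p i) (p j)

/-- `(G,p)` is universally rigid: every framework `(G,q)` in any dimension `s`
dominated by `(G,p)` is congruent to `(G,p)`. -/
def UniversallyRigid {n r : ℕ} (B C S : Set (Fin n × Fin n))
    (p : Fin n → Fin r → ℝ) : Prop :=
  ∀ (s : ℕ) (q : Fin n → Fin s → ℝ), Dominates B C S p q → FrameworkCongruent p q

/-- `(G,q)` is affinely-dominated by `(G,p)`: dominated and `q^i = A p^i + b`. -/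
def AffinelyDominated {n r : ℕ} (B C S : Set (Fin n × Fin n))
    (p q : Fin n → Fin r → ℝ) : Prop :=
  Dominates B C S p q ∧
  ∃ (A : Matrix (Fin r) (Fin r) ℝ) (b : Fin r → ℝ), ∀ i, q i = A.mulVec (p i) + b

/-- `ω` is an equilibrium stress of the framework with edge set `E` and configuration `p`. -/
def IsStress {n r : ℕ} (E : Set (Fin n × Fin n)) (p : Fin n → Fin r → ℝ)
    (ω : Fin n → Fin n → ℝ) : Prop :=
  (∀ i j, ω i j = ω j i) ∧ (∀ i j, (i, j) ∉ E → ω i j = 0) ∧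
  (∀ i : Fin n, ∑ j, ω i j • (p i - p j) = 0)

/-- A stress is proper if `ω_ij ≥ 0` on cables and `ω_ij ≤ 0` on struts. -/
def IsProperStress {n : ℕ} (C S : Set (Fin n × Fin n)) (ω : Fin n → Fin n → ℝ) : Prop :=
  (∀ e ∈ C, 0 ≤ ω e.1 e.2) ∧ (∀ e ∈ S, ω e.1 e.2 ≤ 0)

/-- The stress matrix `Ω` associated to the stress `ω`. -/
def stressMatrix {n : ℕ} (ω : Fin n → Fin n → ℝ) : Matrix (Fin n) (Fin n) ℝ :=
  Matrix.of fun i j => if i = j then ∑ k, ω i k else -ω i j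

/-- `B`, `C`, `S` are the (symmetrically encoded) bars, cables and struts of a
simple connected tensegrity graph on `{1,…,n}`. -/
def TensegrityGraph {n : ℕ} (B C S : Set (Fin n × Fin n)) : Prop :=
  (∀ i j, (i, j) ∈ B → (j, i) ∈ B) ∧ (∀ i j, (i, j) ∈ C → (j, i) ∈ C) ∧
  (∀ i j, (i, j) ∈ S → (j, i) ∈ S) ∧ (∀ i : Fin n, (i, i) ∉ B ∪ C ∪ S) ∧
  B ∩ C = ∅ ∧ B ∩ S = ∅ ∧ C ∩ S = ∅ ∧
  (SimpleGraph.fromRel fun i j => (i, j) ∈ B ∪ C ∪ S).Connected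

/-- A set of points of `ℝ^r` is in general position if every `r+1` of them are
affinely independent. -/
def SetInGeneralPosition {r : ℕ} (A : Set (Fin r → ℝ)) : Prop :=
  ∀ T : Finset (Fin r → ℝ), ↑T ⊆ A → T.card = r + 1 →
    AffineIndependent ℝ (fun x : {x // x ∈ T} => (x : Fin r → ℝ))

/-- `Z` is a Gale matrix of the configuration with matrix `P`: its columns form a
basis of the null space of the matrix obtained by stacking `Pᵀ` on top of `eᵀ`. -/
def IsGaleMatrix {n r m : ℕ} (P : Matrix (Fin n) (Fin r) ℝ)
    (Z : Matrix (Fin n) (Fin m) ℝ) : Prop :=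
  (∀ k, Pᵀ *ᵥ (fun i => Z i k) = 0) ∧ (∀ k, ∑ i, Z i k = 0) ∧
  LinearIndependent ℝ (fun k i => Z i k) ∧
  ∀ v : Fin n → ℝ, Pᵀ *ᵥ v = 0 → ∑ i, v i = 0 →
    v ∈ Submodule.span ℝ (Set.range fun k i => Z i k)

/-- `Ω` is a stress matrix of the framework with edge set `E` and configuration
matrix `P` (with centroid at the origin): it is symmetric, vanishes on missing
edges, and satisfies `Pᵀ Ω = 0` and `Ω e = 0`. -/
def IsStressMatrix {n r : ℕ} (E : Set (Fin n × Fin n)) (P : Matrix (Fin n) (Fin r) ℝ)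
    (Ω : Matrix (Fin n) (Fin n) ℝ) : Prop :=
  Ω.IsSymm ∧ (∀ i j, i ≠ j → (i, j) ∉ E → Ω i j = 0) ∧
  Pᵀ * Ω = 0 ∧ Ω *ᵥ (fun _ => (1 : ℝ)) = 0

/-- The matrix `F^{ij} = (e^i - e^j)(e^i - e^j)ᵀ`. -/
def Fmat {n : ℕ} (i j : Fin n) : Matrix (Fin n) (Fin n) ℝ :=
  Matrix.vecMulVec (Pi.single i 1 - Pi.single j 1) (Pi.single i 1 - Pi.single j 1)

/-- The matrix `E^{ij} = e^i (e^j)ᵀ + e^j (e^i)ᵀ`. -/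
def Emat {n : ℕ} (i j : Fin n) : Matrix (Fin n) (Fin n) ℝ :=
  Matrix.vecMulVec (Pi.single i 1) (Pi.single j 1) +
    Matrix.vecMulVec (Pi.single j 1) (Pi.single i 1)

/-- The matrix `L^i = e^i eᵀ + e (e^i)ᵀ`. -/
def Lmat {n : ℕ} (i : Fin n) : Matrix (Fin n) (Fin n) ℝ :=
  Matrix.vecMulVec (Pi.single i 1) (fun _ => 1) +
    Matrix.vecMulVec (fun _ => 1) (Pi.single i 1)

/-- `ℰ(y) = Σ y_ij E^{ij}` (for `y` supported on the relevant pairs `i < j`). -/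
def EscrY {n : ℕ} (y : Fin n → Fin n → ℝ) : Matrix (Fin n) (Fin n) ℝ :=
  ∑ i, ∑ j, y i j • Emat i j

/-- The vector `x = -(1/n) ℰ(y) e + (1/(2n²)) (eᵀ ℰ(y) e) e`. -/
def xvec {n : ℕ} (y : Fin n → Fin n → ℝ) : Fin n → ℝ :=
  (-(1 / (n : ℝ))) • (EscrY y *ᵥ fun _ => (1 : ℝ)) +
    ((1 / (2 * (n : ℝ) ^ 2)) * ((fun _ => (1 : ℝ)) ⬝ᵥ (EscrY y *ᵥ fun _ => (1 : ℝ)))) •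
      (fun _ : Fin n => (1 : ℝ))

/-! The stress energy `∑ ω_ij ‖q^i - q^j‖²` of a framework dominated by `(G,p)` is at most that of
`p`, which vanishes by equilibrium; since `Ω` is positive semidefinite, every coordinate vector of
`q` then lies in `ker Ω`. This kernel has dimension `r + 1` and contains the values at the nodes of
all affine functions `x ↦ a ⬝ x + b`, which form an `(r + 1)`-dimensional space because `p` is
`r`-dimensional; so `q^i = A p^i + b`. Replacing `A` by a square matrix `M` with `MᵀM = AᵀA`
gives a framework `M p^i` in `ℝ^r` with the same pairwise distances as `q`; it is
affinely-dominated by `p`, hence congruent to it. -/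

lemma sqDist_eq_dotProduct {r : ℕ} (x y : Fin r → ℝ) : sqDist x y = (x - y) ⬝ᵥ (x - y) := by
  simp [sqDist, dotProduct, sq]

lemma sqDist_add_right {r : ℕ} (x y b : Fin r → ℝ) : sqDist (x + b) (y + b) = sqDist x y := by
  simp [sqDist]

lemma mulVec_dotProduct_mulVec_self {m k : ℕ} (A : Matrix (Fin m) (Fin k) ℝ) (v : Fin k → ℝ) :
    (A *ᵥ v) ⬝ᵥ (A *ᵥ v) = v ⬝ᵥ ((Aᵀ * A) *ᵥ v) := by
  conv_rhs => rw [← mulVec_mulVec, dotProduct_mulVec, vecMul_transpose]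

open scoped MatrixOrder in
lemma exists_sqDist_mulVec_eq {s r : ℕ} (A : Matrix (Fin s) (Fin r) ℝ) :
    ∃ M : Matrix (Fin r) (Fin r) ℝ, ∀ x y, sqDist (M *ᵥ x) (M *ᵥ y) = sqDist (A *ᵥ x) (A *ᵥ y) := by
  obtain ⟨M, hM⟩ := CStarAlgebra.nonneg_iff_eq_star_mul_self.mp
    (posSemidef_conjTranspose_mul_self A).nonneg
  refine ⟨M, fun x y => ?_⟩
  simp only [sqDist_eq_dotProduct, ← mulVec_sub, mulVec_dotProduct_mulVec_self,
    ← conjTranspose_eq_transpose_of_trivial, hM, star_eq_conjTranspose]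

lemma Dominates.of_sqDist_eq {n r s t : ℕ} {B C S : Set (Fin n × Fin n)}
    {p : Fin n → Fin r → ℝ} {q : Fin n → Fin s → ℝ} {q' : Fin n → Fin t → ℝ}
    (hq : Dominates B C S p q) (h : ∀ i j, sqDist (q' i) (q' j) = sqDist (q i) (q j)) :
    Dominates B C S p q' := by
  obtain ⟨hB, hC, hS⟩ := hq
  exact ⟨fun e he => h _ _ ▸ hB e he, fun e he => h _ _ ▸ hC e he, fun e he => h _ _ ▸ hS e he⟩

def affineEval {ι : Type*} {r : ℕ} (p : ι → Fin r → ℝ) : (Fin r → ℝ) × ℝ →ₗ[ℝ] ι → ℝ where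
  toFun c i := c.1 ⬝ᵥ p i + c.2
  map_add' c d := by
    ext i
    simp only [Prod.fst_add, Prod.snd_add, add_dotProduct, Pi.add_apply]
    ring
  map_smul' a c := by ext i; simp [smul_dotProduct, mul_add]

@[simp]
lemma affineEval_apply {ι : Type*} {r : ℕ} (p : ι → Fin r → ℝ) (c : (Fin r → ℝ) × ℝ) (i : ι) :
    affineEval p c i = c.1 ⬝ᵥ p i + c.2 :=
  rfl

lemma affineEval_injective {ι : Type*} {r : ℕ} {p : ι → Fin r → ℝ}
    (hdim : affineSpan ℝ (Set.range p) = ⊤) : Function.Injective (affineEval p) := by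
  rw [← LinearMap.ker_eq_bot, LinearMap.ker_eq_bot']
  rintro ⟨a, b⟩ hab
  let f : (Fin r → ℝ) →ᵃ[ℝ] ℝ := (dotProductBilin ℝ ℝ a).toAffineMap + AffineMap.const ℝ _ b
  have hf : f = AffineMap.const ℝ _ 0 := by
    refine AffineMap.ext_on hdim ?_
    rintro _ ⟨i, rfl⟩
    simpa [f] using congrFun hab i
  have hb : b = 0 := by simpa [f] using congrArg (· 0) hf
  have ha : a = 0 := by
    ext l
    simpa [f, hb] using congrArg (· (Pi.single l 1)) hf
  simp [ha, hb]

section Stress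

variable {n : ℕ} {ω : Fin n → Fin n → ℝ}

def stressEnergy (ω : Fin n → Fin n → ℝ) {s : ℕ} (x : Fin n → Fin s → ℝ) : ℝ :=
  ∑ i, ∑ j, ω i j * sqDist (x i) (x j)

lemma stressMatrix_eq_diagonal_sub (hdiag : ∀ i, ω i i = 0) :
    stressMatrix ω = diagonal (fun i => ∑ k, ω i k) - of ω := by
  ext i j
  by_cases h : i = j
  · subst h; simp [stressMatrix, hdiag]
  · simp [stressMatrix, h]

lemma stressMatrix_mulVec_apply (hdiag : ∀ i, ω i i = 0) (x : Fin n → ℝ) (i : Fin n) :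
    (stressMatrix ω *ᵥ x) i = ∑ j, ω i j * (x i - x j) := by
  rw [stressMatrix_eq_diagonal_sub hdiag, sub_mulVec, Pi.sub_apply, mulVec_diagonal,
    Finset.sum_mul]
  simp only [mul_sub, Finset.sum_sub_distrib]
  rfl

lemma sum_mul_sub_sq_eq_dotProduct_stressMatrix_mulVec (hsym : ∀ i j, ω i j = ω j i)
    (hdiag : ∀ i, ω i i = 0) (x : Fin n → ℝ) :
    ∑ i, ∑ j, ω i j * (x i - x j) ^ 2 = 2 * (x ⬝ᵥ stressMatrix ω *ᵥ x) := by
  have hdot : x ⬝ᵥ stressMatrix ω *ᵥ x = ∑ i, ∑ j, ω i j * (x i - x j) * x i := by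
    simp only [dotProduct, stressMatrix_mulVec_apply hdiag, Finset.mul_sum]
    exact Finset.sum_congr rfl fun i _ => Finset.sum_congr rfl fun j _ => by ring
  have hswap : ∑ i, ∑ j, ω i j * (x i - x j) * x i = -∑ i, ∑ j, ω i j * (x i - x j) * x j := by
    rw [Finset.sum_comm, ← Finset.sum_neg_distrib]
    refine Finset.sum_congr rfl fun i _ => ?_
    rw [← Finset.sum_neg_distrib]
    refine Finset.sum_congr rfl fun j _ => ?_
    rw [hsym j i]; ring
  calc ∑ i, ∑ j, ω i j * (x i - x j) ^ 2
      = ∑ i, ∑ j, ω i j * (x i - x j) * x i - ∑ i, ∑ j, ω i j * (x i - x j) * x j := by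
        simp only [← Finset.sum_sub_distrib]
        exact Finset.sum_congr rfl fun i _ => Finset.sum_congr rfl fun j _ => by ring
    _ = 2 * (x ⬝ᵥ stressMatrix ω *ᵥ x) := by rw [hdot, hswap]; ring

lemma stressEnergy_eq_sum_dotProduct (hsym : ∀ i j, ω i j = ω j i) (hdiag : ∀ i, ω i i = 0)
    {s : ℕ} (x : Fin n → Fin s → ℝ) :
    stressEnergy ω x = ∑ k, 2 * ((fun i => x i k) ⬝ᵥ stressMatrix ω *ᵥ fun i => x i k) := by
  simp only [← sum_mul_sub_sq_eq_dotProduct_stressMatrix_mulVec hsym hdiag, stressEnergy, sqDist,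
    Finset.mul_sum]
  exact (Finset.sum_congr rfl fun i _ => Finset.sum_comm).trans Finset.sum_comm

lemma stressMatrix_mulVec_one (hdiag : ∀ i, ω i i = 0) :
    stressMatrix ω *ᵥ (fun _ => (1 : ℝ)) = 0 := by
  ext i
  simp [stressMatrix_mulVec_apply hdiag]

lemma IsStress.stressMatrix_mulVec_coord {r : ℕ} {E : Set (Fin n × Fin n)} {p : Fin n → Fin r → ℝ}
    (hstress : IsStress E p ω) (hdiag : ∀ i, ω i i = 0) (k : Fin r) :
    stressMatrix ω *ᵥ (fun i => p i k) = 0 := by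
  ext i
  simpa [stressMatrix_mulVec_apply hdiag, Finset.sum_apply] using congrFun (hstress.2.2 i) k

lemma IsStress.stressEnergy_eq_zero {r : ℕ} {E : Set (Fin n × Fin n)} {p : Fin n → Fin r → ℝ}
    (hstress : IsStress E p ω) (hdiag : ∀ i, ω i i = 0) : stressEnergy ω p = 0 := by
  simp [stressEnergy_eq_sum_dotProduct hstress.1 hdiag, hstress.stressMatrix_mulVec_coord hdiag]

lemma IsStress.range_affineEval_le_ker {r : ℕ} {E : Set (Fin n × Fin n)} {p : Fin n → Fin r → ℝ}
    (hstress : IsStress E p ω) (hdiag : ∀ i, ω i i = 0) :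
    LinearMap.range (affineEval p) ≤ LinearMap.ker (stressMatrix ω).mulVecLin := by
  rintro _ ⟨⟨a, b⟩, rfl⟩
  have hcoord : affineEval p (a, b) = ∑ k, a k • (fun i => p i k) + b • fun _ => 1 := by
    ext i
    simp [dotProduct, Finset.sum_apply, mul_comm]
  simp [hcoord, mulVec_add, mulVec_sum, mulVec_smul, hstress.stressMatrix_mulVec_coord hdiag,
    stressMatrix_mulVec_one hdiag]

lemma stressEnergy_le_of_dominates {r s : ℕ} {B C S : Set (Fin n × Fin n)}
    {p : Fin n → Fin r → ℝ} {q : Fin n → Fin s → ℝ} (hproper : IsProperStress C S ω)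
    (hsupp : ∀ i j, (i, j) ∉ B ∪ C ∪ S → ω i j = 0) (hdom : Dominates B C S p q) :
    stressEnergy ω q ≤ stressEnergy ω p := by
  obtain ⟨hB, hC, hS⟩ := hdom
  refine Finset.sum_le_sum fun i _ => Finset.sum_le_sum fun j _ => ?_
  by_cases hiB : (i, j) ∈ B
  · rw [hB _ hiB]
  by_cases hiC : (i, j) ∈ C
  · exact mul_le_mul_of_nonneg_left (hC _ hiC) (hproper.1 _ hiC)
  by_cases hiS : (i, j) ∈ S
  · exact mul_le_mul_of_nonpos_left (hS _ hiS) (hproper.2 _ hiS)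
  simp [hsupp i j (by simp [hiB, hiC, hiS])]

lemma stressMatrix_mulVec_eq_zero_of_stressEnergy_nonpos (hsym : ∀ i j, ω i j = ω j i)
    (hdiag : ∀ i, ω i i = 0) (hpsd : (stressMatrix ω).PosSemidef) {s : ℕ}
    {x : Fin n → Fin s → ℝ} (hx : stressEnergy ω x ≤ 0) (k : Fin s) :
    stressMatrix ω *ᵥ (fun i => x i k) = 0 := by
  have hnonneg : ∀ k, 0 ≤ 2 * ((fun i => x i k) ⬝ᵥ stressMatrix ω *ᵥ fun i => x i k) := fun k => by
    simpa using mul_nonneg zero_le_two (hpsd.dotProduct_mulVec_nonneg fun i => x i k)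
  rw [stressEnergy_eq_sum_dotProduct hsym hdiag] at hx
  have hk := (Finset.sum_eq_zero_iff_of_nonneg fun k _ => hnonneg k).mp
    (hx.antisymm (Finset.sum_nonneg fun k _ => hnonneg k)) k (Finset.mem_univ k)
  exact (hpsd.dotProduct_mulVec_zero_iff _).mp (by simpa using hk)

lemma IsStress.range_affineEval_eq_ker {r : ℕ} {E : Set (Fin n × Fin n)} {p : Fin n → Fin r → ℝ}
    (hstress : IsStress E p ω) (hdiag : ∀ i, ω i i = 0) (hdim : affineSpan ℝ (Set.range p) = ⊤)
    (hrank : (stressMatrix ω).rank = n - r - 1) :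
    LinearMap.range (affineEval p) = LinearMap.ker (stressMatrix ω).mulVecLin := by
  refine Submodule.eq_of_le_of_finrank_le (hstress.range_affineEval_le_ker hdiag) ?_
  have hker := (stressMatrix ω).mulVecLin.finrank_range_add_finrank_ker
  rw [LinearMap.finrank_range_of_inj (affineEval_injective hdim)]
  simp only [Module.finrank_prod, Module.finrank_fin_fun, Module.finrank_self]
  change (stressMatrix ω).rank + _ = _ at hker
  simp only [Module.finrank_fin_fun] at hker
  omega

lemma IsStress.exists_affine_of_stressMatrix_mulVec_eq_zero {r s : ℕ} {E : Set (Fin n × Fin n)}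
    {p : Fin n → Fin r → ℝ} (hstress : IsStress E p ω) (hdiag : ∀ i, ω i i = 0)
    (hdim : affineSpan ℝ (Set.range p) = ⊤) (hrank : (stressMatrix ω).rank = n - r - 1)
    {q : Fin n → Fin s → ℝ} (hq : ∀ k, stressMatrix ω *ᵥ (fun i => q i k) = 0) :
    ∃ (A : Matrix (Fin s) (Fin r) ℝ) (b : Fin s → ℝ), ∀ i, q i = A *ᵥ p i + b := by
  have hrange : ∀ k, (fun i => q i k) ∈ LinearMap.range (affineEval p) := fun k => by
    rw [hstress.range_affineEval_eq_ker hdiag hdim hrank]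
    exact hq k
  choose c hc using hrange
  refine ⟨of fun k => (c k).1, fun k => (c k).2, fun i => ?_⟩
  ext k
  exact (congrFun (hc k) i).symm

end Stress

theorem statement0_general {n r : ℕ}
    (B C S : Set (Fin n × Fin n)) (hG : TensegrityGraph B C S)
    (p : Fin n → Fin r → ℝ)
    (hdim : affineSpan ℝ (Set.range p) = ⊤)
    (ω : Fin n → Fin n → ℝ)
    (hstress : IsStress (B ∪ C ∪ S) p ω)
    (hproper : IsProperStress C S ω)
    (hpsd : (stressMatrix ω).PosSemidef)
    (hrank : (stressMatrix ω).rank = n - r - 1)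
    (hnoaff : ¬ ∃ q : Fin n → Fin r → ℝ,
        AffinelyDominated B C S p q ∧ ¬ FrameworkCongruent p q) :
    UniversallyRigid B C S p := by
  have hdiag : ∀ i, ω i i = 0 := fun i => hstress.2.1 i i (hG.2.2.2.1 i)
  intro s q hdom
  have hker : ∀ k, stressMatrix ω *ᵥ (fun i => q i k) = 0 :=
    stressMatrix_mulVec_eq_zero_of_stressEnergy_nonpos hstress.1 hdiag hpsd <|
      (stressEnergy_le_of_dominates hproper hstress.2.1 hdom).trans
        (hstress.stressEnergy_eq_zero hdiag).le
  obtain ⟨A, b, hq⟩ := hstress.exists_affine_of_stressMatrix_mulVec_eq_zero hdiag hdim hrank hker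
  obtain ⟨M, hM⟩ := exists_sqDist_mulVec_eq A
  have hdist : ∀ i j, sqDist (M *ᵥ p i) (M *ᵥ p j) = sqDist (q i) (q j) := fun i j => by
    rw [hM, hq, hq, sqDist_add_right]
  have hcong : FrameworkCongruent p fun i => M *ᵥ p i := by
    by_contra hncong
    exact hnoaff ⟨_, ⟨hdom.of_sqDist_eq hdist, M, 0, fun i => (add_zero _).symm⟩, hncong⟩
  exact fun i j => (hdist i j).symm.trans (hcong i j)

/-- Connelly: condition (1) a proper PSD stress matrix of rank `n-r-1`
and condition (2) no framework affinely-dominated by but not congruent to `(G,p)`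
imply universal rigidity. -/
theorem statement0 {n r : ℕ} (hr : r ≤ n - 2)
    (B C S : Set (Fin n × Fin n)) (hG : TensegrityGraph B C S)
    (p : Fin n → Fin r → ℝ)
    (hdim : affineSpan ℝ (Set.range p) = ⊤)
    (ω : Fin n → Fin n → ℝ)
    (hstress : IsStress (B ∪ C ∪ S) p ω)
    (hproper : IsProperStress C S ω)
    (hpsd : (stressMatrix ω).PosSemidef)
    (hrank : (stressMatrix ω).rank = n - r - 1)
    (hnoaff : ¬ ∃ q : Fin n → Fin r → ℝ,
        AffinelyDominated B C S p q ∧ ¬ FrameworkCongruent p q) :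
    UniversallyRigid B C S p :=
  statement0_general B C S hG p hdim ω hstress hproper hpsd hrank hnoaff
end
end

section
/- Let (K, K̄) be a partition of the set of all unordered pairs {{i,j} : 1 ≤ i < j ≤ n}, and let 𝓛 = span{F^{ij} : {i,j} ∈ K} inside the space 𝒮_n of n×n real symmetric matrices with inner product ⟨A,B⟩ = trace(AB). Then the set {E^{ij} : {i,j} ∈ K̄} ∪ {L^i : i = 1,…,n} is a basis of 𝓛^⊥, the orthogonal complement of 𝓛 in 𝒮_n. -/
open Matrix BigOperators

noncomputable section

/-!
A symmetric `A` is orthogonal to `F^{ij}` iff `2 A_ij = A_ii + A_jj`. Writing `d_i = A_ii / 2`,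
the matrix `A - Σ d_i L^i` has zero diagonal, and its off-diagonal entries vanish exactly on
the pairs of `K`; so it is a combination of the `E^{ij}` with `{i,j} ∈ K̄`. Reading the
diagonal and then the entries `(i,j)`, `i < j`, of a combination of the `E^{ij}` and `L^i`
recovers its coefficients, which gives linear independence.
-/

lemma Matrix.IsSymm.ext_of_le {ι α : Type*} [LinearOrder ι] {A B : Matrix ι ι α}
    (hA : A.IsSymm) (hB : B.IsSymm) (h : ∀ a b, a ≤ b → A a b = B a b) : A = B := by
  ext a b
  rcases le_total a b with hab | hba
  · exact h a b hab
  · rw [← hA.apply a b, ← hB.apply a b, h b a hba]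

section EntryFormulas

variable {n : ℕ}

lemma Emat_apply (i j a b : Fin n) :
    Emat i j a b = (if a = i ∧ b = j then (1 : ℝ) else 0) + (if a = j ∧ b = i then 1 else 0) := by
  simp only [Emat, Matrix.add_apply, vecMulVec_apply, Pi.single_apply]
  split_ifs <;> simp_all

lemma Lmat_apply (i a b : Fin n) :
    Lmat i a b = (if a = i then (1 : ℝ) else 0) + (if b = i then 1 else 0) := by
  simp [Lmat, vecMulVec_apply, Pi.single_apply]

lemma trace_Fmat_mul (i j : Fin n) (A : Matrix (Fin n) (Fin n) ℝ) :
    (Fmat i j * A).trace = A i i + A j j - A i j - A j i := by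
  simp only [Fmat, trace, diag, mul_apply, vecMulVec_apply, Pi.sub_apply, Pi.single_apply,
    sub_mul, mul_sub, Finset.sum_sub_distrib, ite_mul, mul_ite, one_mul, mul_one, zero_mul,
    mul_zero, Finset.sum_ite_eq', Finset.mem_univ, if_true]
  ring

lemma Emat_isSymm (i j : Fin n) : (Emat i j).IsSymm := by
  rw [IsSymm, Emat, transpose_add, transpose_vecMulVec, transpose_vecMulVec, add_comm]

lemma Lmat_isSymm (i : Fin n) : (Lmat i).IsSymm :=
  IsSymm.ext fun a b => by rw [Lmat_apply, Lmat_apply, add_comm]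

lemma Emat_apply_of_lt {i j a b : Fin n} (hij : i < j) (hab : a < b) :
    Emat i j a b = if (i, j) = (a, b) then 1 else 0 := by
  have hswap : ¬(a = j ∧ b = i) := by rintro ⟨rfl, rfl⟩; exact lt_asymm hij hab
  rw [Emat_apply, if_neg hswap, add_zero]
  exact if_congr (by rw [Prod.mk.injEq, eq_comm (a := a), eq_comm (a := b)]) rfl rfl

lemma Emat_apply_self {i j : Fin n} (hij : i ≠ j) (a : Fin n) : Emat i j a a = 0 := by
  have h₁ : ¬(a = i ∧ a = j) := fun h => hij (h.1.symm.trans h.2)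
  have h₂ : ¬(a = j ∧ a = i) := fun h => hij (h.2.symm.trans h.1)
  rw [Emat_apply, if_neg h₁, if_neg h₂, add_zero]

lemma trace_Fmat_mul_Lmat (i j k : Fin n) : (Fmat i j * Lmat k).trace = 0 := by
  simp only [trace_Fmat_mul, Lmat_apply]
  ring

lemma trace_Fmat_mul_Emat {i j a b : Fin n} (hij : i < j) (hab : a < b)
    (hne : (a, b) ≠ (i, j)) : (Fmat i j * Emat a b).trace = 0 := by
  rw [trace_Fmat_mul, Emat_apply_self hab.ne, Emat_apply_self hab.ne,
    (Emat_isSymm a b).apply i j, Emat_apply_of_lt hab hij, if_neg hne]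
  ring

lemma sum_smul_Lmat_apply (d : Fin n → ℝ) (a b : Fin n) :
    (∑ i, d i • Lmat i) a b = d a + d b := by
  simp [Matrix.sum_apply, Lmat_apply, mul_add, Finset.sum_add_distrib]

variable {P : Set (Fin n × Fin n)} [Fintype P] (hP : ∀ e ∈ P, e.1 < e.2) (c : P → ℝ)
include hP

lemma sum_smul_Emat_apply_self (a : Fin n) :
    (∑ e : P, c e • Emat e.1.1 e.1.2) a a = 0 := by
  simp [Matrix.sum_apply, Emat_apply_self (hP _ _).ne]

lemma sum_smul_Emat_apply_mem (e : P) :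
    (∑ e' : P, c e' • Emat e'.1.1 e'.1.2) e.1.1 e.1.2 = c e := by
  rw [Matrix.sum_apply, Fintype.sum_eq_single e]
  · simp [Emat_apply_of_lt (hP _ e.2) (hP _ e.2)]
  · intro e' he'
    rw [Matrix.smul_apply, Emat_apply_of_lt (hP _ e'.2) (hP _ e.2), if_neg, smul_zero]
    exact fun h => he' (Subtype.ext (by simpa using h))

lemma sum_smul_Emat_apply_of_notMem {a b : Fin n} (hab : a < b) (h : (a, b) ∉ P) :
    (∑ e : P, c e • Emat e.1.1 e.1.2) a b = 0 := by
  refine (Matrix.sum_apply _ _ _ _).trans (Finset.sum_eq_zero fun e _ => ?_)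
  rw [Matrix.smul_apply, Emat_apply_of_lt (hP _ e.2) hab, if_neg, smul_zero]
  exact fun h' => h (by simp [← h'])

end EntryFormulas

section OrthogonalComplement

variable {n : ℕ}

/-- `𝓛^⊥` in `𝒮_n`, for `𝓛 = span {F^{ij} : (i, j) ∈ K}` and `⟨A, B⟩ = trace (AB)`. -/
def symmOrthFmat (K : Set (Fin n × Fin n)) : Submodule ℝ (Matrix (Fin n) (Fin n) ℝ) where
  carrier := {A | A.IsSymm ∧ ∀ e ∈ K, (Fmat e.1 e.2 * A).trace = 0}
  add_mem' {A B} hA hB := ⟨hA.1.add hB.1, fun e he => by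
    rw [Matrix.mul_add, trace_add, hA.2 e he, hB.2 e he, add_zero]⟩
  zero_mem' := ⟨isSymm_zero, fun e _ => by rw [Matrix.mul_zero, trace_zero]⟩
  smul_mem' r A hA := ⟨hA.1.smul r, fun e he => by
    rw [Matrix.mul_smul, trace_smul, hA.2 e he, smul_zero]⟩

variable {K P : Set (Fin n × Fin n)}

lemma mem_symmOrthFmat {A : Matrix (Fin n) (Fin n) ℝ} :
    A ∈ symmOrthFmat K ↔ A.IsSymm ∧ ∀ e ∈ K, (Fmat e.1 e.2 * A).trace = 0 :=
  Iff.rfl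

lemma Lmat_mem_symmOrthFmat (i : Fin n) : Lmat i ∈ symmOrthFmat K :=
  ⟨Lmat_isSymm i, fun _ _ => trace_Fmat_mul_Lmat _ _ _⟩

lemma Emat_mem_symmOrthFmat (hK : ∀ e ∈ K, e.1 < e.2) {i j : Fin n} (hij : i < j)
    (hnot : (i, j) ∉ K) : Emat i j ∈ symmOrthFmat K :=
  ⟨Emat_isSymm i j, fun e he =>
    trace_Fmat_mul_Emat (hK e he) hij fun h => hnot (h ▸ he)⟩

lemma linearIndependent_Emat_Lmat (hP : ∀ e ∈ P, e.1 < e.2) :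
    LinearIndependent ℝ (Sum.elim (fun e : P => Emat e.1.1 e.1.2) (fun i : Fin n => Lmat i)) := by
  have := Fintype.ofFinite P
  rw [Fintype.linearIndependent_iff]
  intro g hg
  rw [Fintype.sum_sum_type] at hg
  have hentry : ∀ a b, (∑ e : P, g (.inl e) • Emat e.1.1 e.1.2) a b
      + (∑ i, g (.inr i) • Lmat i) a b = 0 := fun a b => congrFun (congrFun hg a) b
  have hL : ∀ i, g (.inr i) = 0 := fun i => by
    have := hentry i i
    rw [sum_smul_Emat_apply_self hP, sum_smul_Lmat_apply] at this
    linarith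
  rintro (e | i)
  · simpa [sum_smul_Emat_apply_mem hP, sum_smul_Lmat_apply, hL] using hentry e.1.1 e.1.2
  · exact hL i

lemma mem_span_Emat_Lmat (hpart : K ∪ P = {e | e.1 < e.2}) {A : Matrix (Fin n) (Fin n) ℝ}
    (hA : A ∈ symmOrthFmat K) :
    A ∈ Submodule.span ℝ
      (Set.range (Sum.elim (fun e : P => Emat e.1.1 e.1.2) (fun i : Fin n => Lmat i))) := by
  have := Fintype.ofFinite P
  have hP : ∀ e ∈ P, e.1 < e.2 := fun e he => hpart.subset (Or.inr he)
  obtain ⟨hAsymm, hAorth⟩ := mem_symmOrthFmat.mp hA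
  set d : Fin n → ℝ := fun i => A i i / 2
  set c : P → ℝ := fun e => A e.1.1 e.1.2 - d e.1.1 - d e.1.2
  have hdecomp : A = ∑ e : P, c e • Emat e.1.1 e.1.2 + ∑ i, d i • Lmat i := by
    have hsymm : (∑ e : P, c e • Emat e.1.1 e.1.2 + ∑ i, d i • Lmat i).IsSymm := by
      simp only [IsSymm, transpose_add, transpose_sum, transpose_smul, (Emat_isSymm _ _).eq,
        (Lmat_isSymm _).eq]
    refine hAsymm.ext_of_le hsymm fun a b hab => ?_
    rw [Matrix.add_apply, sum_smul_Lmat_apply]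
    rcases hab.eq_or_lt with rfl | hlt
    · rw [sum_smul_Emat_apply_self hP]
      ring
    by_cases hmem : (a, b) ∈ P
    · rw [show _ = c ⟨(a, b), hmem⟩ from sum_smul_Emat_apply_mem hP c ⟨(a, b), hmem⟩]
      ring
    · have hK : (a, b) ∈ K := (hpart.symm.subset hlt).resolve_right hmem
      have horth := hAorth _ hK
      rw [trace_Fmat_mul, hAsymm.apply a b] at horth
      rw [sum_smul_Emat_apply_of_notMem hP c hlt hmem]
      simp only [d]
      linarith
  rw [hdecomp]
  exact Submodule.add_mem _
    (Submodule.sum_mem _ fun e _ => Submodule.smul_mem _ _ (Submodule.subset_span ⟨.inl e, rfl⟩))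
    (Submodule.sum_mem _ fun i _ => Submodule.smul_mem _ _ (Submodule.subset_span ⟨.inr i, rfl⟩))

lemma span_Emat_Lmat_eq_symmOrthFmat (hpart : K ∪ P = {e | e.1 < e.2}) (hdisj : K ∩ P = ∅) :
    Submodule.span ℝ
      (Set.range (Sum.elim (fun e : P => Emat e.1.1 e.1.2) (fun i : Fin n => Lmat i))) =
      symmOrthFmat K := by
  have hK : ∀ e ∈ K, e.1 < e.2 := fun e he => hpart.subset (Or.inl he)
  refine le_antisymm (Submodule.span_le.mpr (Set.range_subset_iff.mpr ?_))
    fun A hA => mem_span_Emat_Lmat hpart hA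
  rintro (e | i)
  · exact Emat_mem_symmOrthFmat hK (hpart.subset (Or.inr e.2)) fun he =>
      hdisj.subset ⟨he, e.2⟩
  · exact Lmat_mem_symmOrthFmat i

end OrthogonalComplement

/-- for a partition `(K, K̄)` of the pairs `i < j`, the family
`{E^{ij} : {i,j} ∈ K̄} ∪ {L^i : i = 1,…,n}` is a basis of the orthogonal complement
(w.r.t. `⟨A,B⟩ = trace (AB)`) of `span {F^{ij} : {i,j} ∈ K}` in the space of
symmetric `n × n` matrices. -/
theorem statement6 {n : ℕ} (K Kbar : Set (Fin n × Fin n))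
    (hpart : K ∪ Kbar = {e : Fin n × Fin n | e.1 < e.2})
    (hdisj : K ∩ Kbar = ∅) :
    LinearIndependent ℝ
      (Sum.elim (fun e : {e : Fin n × Fin n // e ∈ Kbar} => Emat e.1.1 e.1.2)
        (fun i : Fin n => Lmat i)) ∧
    ∀ A : Matrix (Fin n) (Fin n) ℝ,
      A ∈ Submodule.span ℝ (Set.range
        (Sum.elim (fun e : {e : Fin n × Fin n // e ∈ Kbar} => Emat e.1.1 e.1.2)
          (fun i : Fin n => Lmat i))) ↔
      A.IsSymm ∧ ∀ e ∈ K, (Fmat e.1 e.2 * A).trace = 0 := by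
  refine ⟨linearIndependent_Emat_Lmat fun e he => hpart.subset (Or.inr he), fun A => ?_⟩
  rw [span_Emat_Lmat_eq_symmOrthFmat hpart hdisj, mem_symmOrthFmat]
end
end

section
/- Let (G,p) be an r-dimensional tensegrity framework in ℝ^r and let Z be a Gale matrix of (G,p). Then there exists a tensegrity framework (G,p') affinely-dominated by, but not congruent to, (G,p) if and only if there exist a non-zero y = (y_ij) ∈ ℝ^{|Ē|+|C|+|S|} with y_ij ≥ 0 for all {i,j} ∈ C and y_ij ≤ 0 for all {i,j} ∈ S, and a vector ξ ∈ ℝ^{n−r−1}, such that ℰ(y) Z = e ξ^T. -/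
open Matrix BigOperators

noncomputable section

/-!
An affine image `A p + b` changes the squared length of `{i, j}` by the quadratic form of
`AᵀA - I` at `p i - p j`.

Forward: the decrease of the squared lengths is `δ_ij = f_i + f_j - 2 (⟨p'_i, p'_j⟩ - ⟨p_i, p_j⟩)`
with `f_i = |p_i|² - |p'_i|²`. The columns of `Z` are orthogonal to `e`, to the coordinates of `p`
and hence to those of every affine image of `p`, so only the `f_j` term survives in `ℰ(δ) Z`,
which is therefore of the form `e ξᵀ`.

Backward: centering `ℰ(y)` on both sides gives a symmetric `N` with `N e = 0` and `N Z = 0`. By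
the Gale property `N` vanishes on `ker Pᵀ`, so `N = P Φ Pᵀ` with `Φ` symmetric, and
`(p_i - p_j)ᵀ Φ (p_i - p_j) = -2 ℰ(y)_ij`. For `A` with `AᵀA = I + ε Φ` (positive semidefinite
once `ε > 0` is small) the framework `A p` has its squared lengths shifted by `-2 ε ℰ(y)_ij`: this
vanishes on bars and has the signs that domination requires on cables and struts.
-/

theorem exists_eq_mul_mul_transpose_of_ker_le {K m k : Type*} [Field K] [Fintype m] [Fintype k]
    [DecidableEq m] [DecidableEq k] {P : Matrix m k K} {N : Matrix m m K}
    (hN : N.IsSymm) (hP : Function.Surjective Pᵀ.mulVec)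
    (hker : ∀ v, Pᵀ *ᵥ v = 0 → N *ᵥ v = 0) :
    ∃ Φ : Matrix k k K, Φ.IsSymm ∧ N = P * Φ * Pᵀ := by
  obtain ⟨g, hg⟩ := Pᵀ.mulVecLin.exists_rightInverse_of_surjective
    (LinearMap.range_eq_top.2 hP)
  set R := LinearMap.toMatrix' g
  have hPR : Pᵀ * R = 1 := by
    rw [← LinearMap.toMatrix'_toLin' Pᵀ, Matrix.toLin'_apply', ← LinearMap.toMatrix'_comp, hg,
      LinearMap.toMatrix'_id]
  have hNR : N = N * R * Pᵀ := by
    refine Matrix.ext_iff_mulVec.2 fun v => ?_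
    have hv : Pᵀ *ᵥ (v - R *ᵥ (Pᵀ *ᵥ v)) = 0 := by
      rw [Matrix.mulVec_sub, Matrix.mulVec_mulVec, hPR, Matrix.one_mulVec, sub_self]
    have hNv := hker _ hv
    rw [Matrix.mulVec_sub, sub_eq_zero] at hNv
    rw [hNv, Matrix.mulVec_mulVec, Matrix.mulVec_mulVec, Matrix.mul_assoc]
  have hRN : N = P * Rᵀ * N := by
    conv_lhs => rw [← hN.eq, hNR]
    rw [Matrix.transpose_mul, Matrix.transpose_mul, Matrix.transpose_transpose, hN.eq,
      Matrix.mul_assoc]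
  refine ⟨Rᵀ * N * R, ?_, ?_⟩
  · rw [Matrix.IsSymm, Matrix.transpose_mul, Matrix.transpose_mul, Matrix.transpose_transpose,
      hN.eq, Matrix.mul_assoc]
  · conv_lhs => rw [hNR, hRN]
    simp only [Matrix.mul_assoc]

theorem span_range_eq_top_of_affineSpan_eq_top {K V ι : Type*} [Ring K] [AddCommGroup V]
    [Module K V] {p : ι → V} (hdim : affineSpan K (Set.range p) = ⊤) :
    Submodule.span K (Set.range p) = ⊤ := by
  have := hdim ▸ affineSpan_le_toAffineSubspace_span (k := K) (s := Set.range p)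
  exact Submodule.eq_top_iff'.2 fun x => Submodule.mem_toAffineSubspace.1 (this trivial)

section Centering

variable {ι : Type*} [Fintype ι] [DecidableEq ι]

variable (ι) in
def centeringMatrix : Matrix ι ι ℝ :=
  1 - (Fintype.card ι : ℝ)⁻¹ • Matrix.of fun _ _ => 1

theorem centeringMatrix_isSymm : (centeringMatrix ι).IsSymm := by
  simp only [centeringMatrix, Matrix.IsSymm, Matrix.transpose_sub, Matrix.transpose_one,
    Matrix.transpose_smul]
  rfl

theorem centeringMatrix_mulVec (v : ι → ℝ) :
    centeringMatrix ι *ᵥ v = v - ((Fintype.card ι : ℝ)⁻¹ * ∑ i, v i) • fun _ => 1 := by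
  rw [centeringMatrix, Matrix.sub_mulVec, Matrix.one_mulVec, Matrix.smul_mulVec]
  ext i
  simp [Matrix.mulVec, dotProduct]

theorem sum_centeringMatrix_mulVec (v : ι → ℝ) : ∑ i, (centeringMatrix ι *ᵥ v) i = 0 := by
  rcases isEmpty_or_nonempty ι with _ | _
  · exact Finset.sum_of_isEmpty _
  · have hcard : (Fintype.card ι : ℝ) ≠ 0 := Nat.cast_ne_zero.2 Fintype.card_ne_zero
    simp [centeringMatrix_mulVec, Finset.sum_sub_distrib, hcard]

theorem centeringMatrix_mulVec_of_sum_eq_zero {v : ι → ℝ} (hv : ∑ i, v i = 0) :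
    centeringMatrix ι *ᵥ v = v := by
  simp [centeringMatrix_mulVec, hv]

theorem centeringMatrix_mulVec_one : centeringMatrix ι *ᵥ (fun _ => 1) = 0 := by
  ext i
  have : Nonempty ι := ⟨i⟩
  have hcard : (Fintype.card ι : ℝ) ≠ 0 := Nat.cast_ne_zero.2 Fintype.card_ne_zero
  simp [centeringMatrix_mulVec, hcard]

theorem single_sub_single_dotProduct_mulVec {M : Matrix ι ι ℝ} (hM : M.IsSymm) (i j : ι) :
    (Pi.single i 1 - Pi.single j 1) ⬝ᵥ (M *ᵥ (Pi.single i 1 - Pi.single j 1)) =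
      M i i + M j j - 2 * M i j := by
  simp only [Matrix.mulVec_sub, Matrix.mulVec_single_one, sub_dotProduct, dotProduct_sub,
    single_dotProduct, one_mul, Matrix.col_apply, hM.apply i j]
  ring

end Centering

section PositiveSemidefinite

variable {k : Type*} [Fintype k]

theorem sq_le_dotProduct_self (u : k → ℝ) (a : k) : u a ^ 2 ≤ u ⬝ᵥ u := by
  simpa only [dotProduct, sq] using
    Finset.single_le_sum (fun b _ => mul_self_nonneg (u b)) (Finset.mem_univ a)

theorem abs_dotProduct_mulVec_le (Φ : Matrix k k ℝ) (u : k → ℝ) :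
    |u ⬝ᵥ (Φ *ᵥ u)| ≤ (∑ a, ∑ b, |Φ a b|) * (u ⬝ᵥ u) := by
  have hprod : ∀ a b, |u a| * |u b| ≤ u ⬝ᵥ u := fun a b => by
    nlinarith [sq_le_dotProduct_self u a, sq_le_dotProduct_self u b, sq_abs (u a),
      sq_abs (u b), sq_nonneg (|u a| - |u b|)]
  calc |u ⬝ᵥ (Φ *ᵥ u)| = |∑ a, ∑ b, Φ a b * (u a * u b)| := by
        simp only [dotProduct, Matrix.mulVec, Finset.mul_sum]
        congr 1
        exact Finset.sum_congr rfl fun a _ => Finset.sum_congr rfl fun b _ => by ring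
    _ ≤ ∑ a, ∑ b, |Φ a b| * (u ⬝ᵥ u) := by
        refine (Finset.abs_sum_le_sum_abs _ _).trans (Finset.sum_le_sum fun a _ => ?_)
        refine (Finset.abs_sum_le_sum_abs _ _).trans (Finset.sum_le_sum fun b _ => ?_)
        rw [abs_mul, abs_mul]
        exact mul_le_mul_of_nonneg_left (hprod a b) (abs_nonneg _)
    _ = (∑ a, ∑ b, |Φ a b|) * (u ⬝ᵥ u) := by simp only [Finset.sum_mul]

theorem posSemidef_one_add_smul [DecidableEq k] {Φ : Matrix k k ℝ} (hΦ : Φ.IsSymm) {ε : ℝ}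
    (hε : 0 ≤ ε) (hεΦ : ε * ∑ a, ∑ b, |Φ a b| ≤ 1) : (1 + ε • Φ).PosSemidef := by
  refine .of_dotProduct_mulVec_nonneg ?_ fun u => ?_
  · rw [Matrix.IsHermitian, Matrix.conjTranspose_eq_transpose_of_trivial, Matrix.transpose_add,
      Matrix.transpose_one, Matrix.transpose_smul, hΦ.eq]
  · have hbound := neg_le_of_abs_le (abs_dotProduct_mulVec_le Φ u)
    have huu : 0 ≤ u ⬝ᵥ u := dotProduct_self_star_nonneg u
    simp only [star_trivial, Matrix.add_mulVec, Matrix.one_mulVec, Matrix.smul_mulVec,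
      dotProduct_add, dotProduct_smul, smul_eq_mul]
    nlinarith [mul_le_mul_of_nonneg_left hbound hε, mul_le_mul_of_nonneg_right hεΦ huu]

open scoped MatrixOrder in
theorem Matrix.PosSemidef.exists_transpose_mul_self [DecidableEq k] {T : Matrix k k ℝ}
    (hT : T.PosSemidef) :
    ∃ A : Matrix k k ℝ, Aᵀ * A = T := by
  refine ⟨CFC.sqrt T, ?_⟩
  have hsa : (CFC.sqrt T)ᴴ = CFC.sqrt T := (CFC.sqrt_nonneg T).isSelfAdjoint
  rw [← Matrix.conjTranspose_eq_transpose_of_trivial, hsa, CFC.sqrt_mul_sqrt_self T hT.nonneg]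

theorem exists_dotProduct_mulVec_eq_add_smul [DecidableEq k] {Φ : Matrix k k ℝ}
    (hΦ : Φ.IsSymm) :
    ∃ ε > 0, ∃ A : Matrix k k ℝ,
      ∀ u, (A *ᵥ u) ⬝ᵥ (A *ᵥ u) = u ⬝ᵥ u + ε * (u ⬝ᵥ (Φ *ᵥ u)) := by
  set c := ∑ a, ∑ b, |Φ a b|
  have hεc : (1 + c)⁻¹ * c ≤ 1 := by
    rw [inv_mul_le_iff₀ (by positivity)]; linarith
  obtain ⟨A, hA⟩ := (posSemidef_one_add_smul hΦ (by positivity) hεc).exists_transpose_mul_self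
  refine ⟨(1 + c)⁻¹, by positivity, A, fun u => ?_⟩
  rw [dotProduct_mulVec, ← Matrix.vecMul_transpose, Matrix.vecMul_vecMul, ← dotProduct_mulVec,
    hA, Matrix.add_mulVec, Matrix.one_mulVec, Matrix.smul_mulVec, dotProduct_add, dotProduct_smul,
    smul_eq_mul]

end PositiveSemidefinite

section Tensegrity

variable {n r : ℕ}

theorem sqDist_eq_dotProduct_sub {s : ℕ} (x y : Fin s → ℝ) :
    sqDist x y = (x - y) ⬝ᵥ (x - y) := by
  simp only [sqDist, dotProduct, Pi.sub_apply, sq]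

theorem EscrY_apply (y : Fin n → Fin n → ℝ) (a b : Fin n) :
    EscrY y a b = y a b + y b a := by
  simp [EscrY, Emat, Matrix.sum_apply, Matrix.vecMulVec_apply, Pi.single_apply,
    Finset.sum_add_distrib]

theorem EscrY_upperTriangle {δ : Fin n → Fin n → ℝ} (hδ : ∀ i j, δ i j = δ j i)
    (hδ₀ : ∀ i, δ i i = 0) : EscrY (fun i j => if i < j then δ i j else 0) = Matrix.of δ := by
  ext i j
  rw [EscrY_apply, Matrix.of_apply]
  rcases lt_trichotomy i j with h | rfl | h
  · simp [h, h.not_gt]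
  · simp [hδ₀]
  · simp [h, h.not_gt, hδ i j]

theorem sum_sqDist_mul_eq {ι : Type*} [Fintype ι] {s : ℕ} {u : ι → Fin s → ℝ} {z : ι → ℝ}
    (hz : ∑ b, z b = 0) (hzu : ∑ b, z b • u b = 0) (a : ι) :
    ∑ b, sqDist (u a) (u b) * z b = ∑ b, (u b ⬝ᵥ u b) * z b := by
  have hcross : ∑ b, (u a ⬝ᵥ u b) * z b = 0 := by
    simpa only [dotProduct_sum, dotProduct_smul, smul_eq_mul, mul_comm, dotProduct_zero]
      using congrArg (u a ⬝ᵥ ·) hzu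
  have hexpand : ∀ b, sqDist (u a) (u b) * z b =
      (u a ⬝ᵥ u a) * z b + (u b ⬝ᵥ u b) * z b - 2 * ((u a ⬝ᵥ u b) * z b) := fun b => by
    rw [sqDist_eq_dotProduct_sub, sub_dotProduct, dotProduct_sub, dotProduct_sub,
      dotProduct_comm (u b) (u a)]
    ring
  simp only [hexpand, Finset.sum_sub_distrib, Finset.sum_add_distrib, ← Finset.mul_sum, hz,
    hcross]
  ring

theorem IsGaleMatrix.sum_smul_eq_zero {m : ℕ} {p : Fin n → Fin r → ℝ}
    {Z : Matrix (Fin n) (Fin m) ℝ} (hZ : IsGaleMatrix (Matrix.of p) Z) (k : Fin m) :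
    ∑ b, Z b k • p b = 0 := by
  ext l
  simpa [Matrix.mulVec, dotProduct, mul_comm] using congrFun (hZ.1 k) l

theorem sum_smul_affine_eq_zero {ι : Type*} [Fintype ι] {z : ι → ℝ} {p : ι → Fin r → ℝ}
    (hz : ∑ b, z b = 0) (hzp : ∑ b, z b • p b = 0) (A : Matrix (Fin r) (Fin r) ℝ)
    (c : Fin r → ℝ) : ∑ b, z b • (A *ᵥ p b + c) = 0 := by
  simp only [smul_add, Finset.sum_add_distrib, ← Matrix.mulVec_smul, ← Matrix.mulVec_sum, hzp,
    ← Finset.sum_smul, hz, Matrix.mulVec_zero, zero_smul, add_zero]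

end Tensegrity

section Certificate

variable {n r m : ℕ}

def IsGaleCertificate (B C S : Set (Fin n × Fin n)) (Z : Matrix (Fin n) (Fin m) ℝ)
    (y : Fin n → Fin n → ℝ) : Prop :=
  y ≠ 0 ∧ (∀ i j, y i j ≠ 0 → i < j ∧ ((i, j) ∉ B ∪ C ∪ S ∨ (i, j) ∈ C ∨ (i, j) ∈ S)) ∧
    (∀ i j, (i, j) ∈ C → 0 ≤ y i j) ∧ (∀ i j, (i, j) ∈ S → y i j ≤ 0) ∧
    ∃ ξ : Fin m → ℝ, EscrY y * Z = Matrix.vecMulVec (fun _ => 1) ξ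

theorem AffinelyDominated.exists_isGaleCertificate {B C S : Set (Fin n × Fin n)}
    {p p' : Fin n → Fin r → ℝ} {Z : Matrix (Fin n) (Fin m) ℝ}
    (hZ : IsGaleMatrix (Matrix.of p) Z) (hdom : AffinelyDominated B C S p p')
    (hnc : ¬ FrameworkCongruent p p') : ∃ y, IsGaleCertificate B C S Z y := by
  obtain ⟨⟨hB, hC, hS⟩, A, c, hp'⟩ := hdom
  set δ : Fin n → Fin n → ℝ := fun i j => sqDist (p i) (p j) - sqDist (p' i) (p' j)
  have hδ : ∀ i j, δ i j = δ j i := fun i j => by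
    simp only [δ, sqDist_eq_dotProduct_sub, ← neg_sub (p i), ← neg_sub (p' i), neg_dotProduct,
      dotProduct_neg, neg_neg]
  have hδ₀ : ∀ i, δ i i = 0 := fun i => by simp [δ, sqDist]
  have hE : EscrY (fun i j => if i < j then δ i j else 0) = Matrix.of δ :=
    EscrY_upperTriangle hδ hδ₀
  refine ⟨fun i j => if i < j then δ i j else 0, ?_, fun i j hy => ?_, fun i j hij => ?_,
    fun i j hij => ?_, fun k => ∑ b, (p b ⬝ᵥ p b - p' b ⬝ᵥ p' b) * Z b k, ?_⟩
  · intro hy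
    obtain ⟨i, j, hij⟩ : ∃ i j, δ i j ≠ 0 := by
      simpa [FrameworkCongruent, δ, sub_eq_zero, eq_comm] using hnc
    have hEij := congrFun (congrFun hE i) j
    rw [hy, EscrY_apply] at hEij
    exact hij (by simpa using hEij.symm)
  · by_cases hlt : i < j
    · simp only [hlt, if_true] at hy
      refine ⟨hlt, ?_⟩
      by_cases hbar : (i, j) ∈ B
      · exact absurd (sub_eq_zero.2 (hB _ hbar).symm) hy
      · by_cases hcab : (i, j) ∈ C
        · exact Or.inr (Or.inl hcab)
        by_cases hstr : (i, j) ∈ S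
        · exact Or.inr (Or.inr hstr)
        · exact Or.inl (by simp [hbar, hcab, hstr])
    · simp [hlt] at hy
  · dsimp only
    split_ifs
    · exact sub_nonneg.2 (hC _ hij)
    · exact le_rfl
  · dsimp only
    split_ifs
    · exact sub_nonpos.2 (hS _ hij)
    · exact le_rfl
  · ext a k
    have hz := hZ.2.1 k
    have hzp := hZ.sum_smul_eq_zero k
    have hzp' : ∑ b, Z b k • p' b = 0 := by
      simpa only [hp'] using sum_smul_affine_eq_zero hz hzp A c
    simp only [hE, Matrix.mul_apply, Matrix.of_apply, Matrix.vecMulVec_apply, one_mul, δ,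
      sub_mul, Finset.sum_sub_distrib, sum_sqDist_mul_eq hz hzp, sum_sqDist_mul_eq hz hzp' a]

end Certificate

section GaleFactorization

variable {n r m : ℕ}

theorem IsGaleMatrix.mulVec_eq_zero_of_transpose_mulVec_eq_zero {p : Fin n → Fin r → ℝ}
    {Z : Matrix (Fin n) (Fin m) ℝ} (hZ : IsGaleMatrix (Matrix.of p) Z)
    (hcentroid : ∀ k, ∑ i, p i k = 0) {N : Matrix (Fin n) (Fin n) ℝ}
    (hNe : N *ᵥ (fun _ => 1) = 0) (hNZ : N * Z = 0) {v : Fin n → ℝ}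
    (hv : (Matrix.of p)ᵀ *ᵥ v = 0) : N *ᵥ v = 0 := by
  have hPe : (Matrix.of p)ᵀ *ᵥ (fun _ => 1) = 0 := by
    ext k; simpa [Matrix.mulVec, dotProduct] using hcentroid k
  have hspan : Submodule.span ℝ (Set.range fun k i => Z i k) ≤ LinearMap.ker N.mulVecLin := by
    rw [Submodule.span_le]
    rintro _ ⟨k, rfl⟩
    change N *ᵥ Z.col k = 0
    rw [← Matrix.mulVec_single_one, Matrix.mulVec_mulVec, hNZ, Matrix.zero_mulVec]
  set w := centeringMatrix (Fin n) *ᵥ v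
  have hw : N *ᵥ w = 0 := hspan <| hZ.2.2.2 w
    (by simp [w, centeringMatrix_mulVec, Matrix.mulVec_sub, Matrix.mulVec_smul, hv, hPe])
    (sum_centeringMatrix_mulVec v)
  have hvw : v = w + ((n : ℝ)⁻¹ * ∑ i, v i) • fun _ => 1 := by
    simp [w, centeringMatrix_mulVec]
  rw [hvw, Matrix.mulVec_add, Matrix.mulVec_smul, hw, hNe, smul_zero, add_zero]

theorem exists_isSymm_dotProduct_mulVec_sub_eq {p : Fin n → Fin r → ℝ}
    (hdim : affineSpan ℝ (Set.range p) = ⊤) (hcentroid : ∀ k, ∑ i, p i k = 0)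
    {Z : Matrix (Fin n) (Fin m) ℝ} (hZ : IsGaleMatrix (Matrix.of p) Z)
    {M : Matrix (Fin n) (Fin n) ℝ} (hM : M.IsSymm) {ξ : Fin m → ℝ}
    (hMZ : M * Z = Matrix.vecMulVec (fun _ => 1) ξ) :
    ∃ Φ : Matrix (Fin r) (Fin r) ℝ, Φ.IsSymm ∧
      ∀ i j, (p i - p j) ⬝ᵥ (Φ *ᵥ (p i - p j)) = M i i + M j j - 2 * M i j := by
  set P := Matrix.of p
  set Q := centeringMatrix (Fin n)
  have hQZ : Q * Z = Z := Matrix.ext_iff_mulVec.2 fun v => by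
    rw [← Matrix.mulVec_mulVec, centeringMatrix_mulVec_of_sum_eq_zero]
    simp only [Matrix.mulVec, dotProduct]
    rw [Finset.sum_comm]
    simp [← Finset.sum_mul, hZ.2.1]
  have hN : (Q * M * Q).IsSymm := by
    rw [Matrix.IsSymm, Matrix.transpose_mul, Matrix.transpose_mul, centeringMatrix_isSymm.eq,
      hM.eq, Matrix.mul_assoc]
  have hNe : (Q * M * Q) *ᵥ (fun _ => 1) = 0 := by
    rw [← Matrix.mulVec_mulVec, centeringMatrix_mulVec_one, Matrix.mulVec_zero]
  have hNZ : Q * M * Q * Z = 0 := by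
    rw [Matrix.mul_assoc, hQZ, Matrix.mul_assoc, hMZ, Matrix.mul_vecMulVec,
      centeringMatrix_mulVec_one, Matrix.zero_vecMulVec]
  have hsurj : Function.Surjective Pᵀ.mulVec := by
    rw [← Matrix.coe_mulVecLin, ← LinearMap.range_eq_top, Matrix.range_mulVecLin]
    exact span_range_eq_top_of_affineSpan_eq_top hdim
  obtain ⟨Φ, hΦ, hfactor⟩ := exists_eq_mul_mul_transpose_of_ker_le hN hsurj
    fun v hv => hZ.mulVec_eq_zero_of_transpose_mulVec_eq_zero hcentroid hNe hNZ hv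
  refine ⟨Φ, hΦ, fun i j => ?_⟩
  set d : Fin n → ℝ := Pi.single i 1 - Pi.single j 1
  have hPd : Pᵀ *ᵥ d = p i - p j := by
    simp only [d, Matrix.mulVec_sub, Matrix.mulVec_single_one]
    rfl
  have hQd : Q *ᵥ d = d := centeringMatrix_mulVec_of_sum_eq_zero (by simp [d])
  calc (p i - p j) ⬝ᵥ (Φ *ᵥ (p i - p j)) = d ⬝ᵥ ((P * Φ * Pᵀ) *ᵥ d) := by
        rw [← hPd, ← Matrix.mulVec_mulVec, ← Matrix.mulVec_mulVec, dotProduct_mulVec d P,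
          ← Matrix.mulVec_transpose]
    _ = (Q *ᵥ d) ⬝ᵥ (M *ᵥ (Q *ᵥ d)) := by
        rw [← hfactor, ← Matrix.mulVec_mulVec, ← Matrix.mulVec_mulVec, dotProduct_mulVec d Q,
          ← Matrix.mulVec_transpose, centeringMatrix_isSymm.eq]
    _ = M i i + M j j - 2 * M i j := by
        rw [hQd]; exact single_sub_single_dotProduct_mulVec hM i j

end GaleFactorization

theorem IsGaleCertificate.exists_affinelyDominated {n r m : ℕ} {B C S : Set (Fin n × Fin n)}
    (hG : TensegrityGraph B C S) {p : Fin n → Fin r → ℝ}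
    (hdim : affineSpan ℝ (Set.range p) = ⊤) (hcentroid : ∀ k, ∑ i, p i k = 0)
    {Z : Matrix (Fin n) (Fin m) ℝ} (hZ : IsGaleMatrix (Matrix.of p) Z)
    {y : Fin n → Fin n → ℝ} (hy : IsGaleCertificate B C S Z y) :
    ∃ p', AffinelyDominated B C S p p' ∧ ¬ FrameworkCongruent p p' := by
  obtain ⟨hy0, hsupp, hyC, hyS, ξ, hξ⟩ := hy
  have hdiag : ∀ i, y i i = 0 := fun i => by
    by_contra hii
    exact lt_irrefl i (hsupp i i hii).1
  have hyt : ∀ i j, y i j ≠ 0 → y j i = 0 := fun i j hij => by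
    by_contra hji
    exact (hsupp i j hij).1.asymm (hsupp j i hji).1
  have hyB : ∀ i j, (i, j) ∈ B → y i j = 0 := fun i j hB => by
    by_contra hij
    rcases (hsupp i j hij).2 with h | h | h
    · exact h (Or.inl (Or.inl hB))
    · exact Set.eq_empty_iff_forall_notMem.1 hG.2.2.2.2.1 (i, j) ⟨hB, h⟩
    · exact Set.eq_empty_iff_forall_notMem.1 hG.2.2.2.2.2.1 (i, j) ⟨hB, h⟩
  have hM : (EscrY y).IsSymm := Matrix.ext fun i j => by
    simp only [Matrix.transpose_apply, EscrY_apply, add_comm]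
  obtain ⟨Φ, hΦ, hquad⟩ := exists_isSymm_dotProduct_mulVec_sub_eq hdim hcentroid hZ hM hξ
  obtain ⟨ε, hε, A, hA⟩ := exists_dotProduct_mulVec_eq_add_smul hΦ
  have hdist : ∀ i j, sqDist (A *ᵥ p i) (A *ᵥ p j) =
      sqDist (p i) (p j) - 2 * ε * (y i j + y j i) := fun i j => by
    rw [sqDist_eq_dotProduct_sub, sqDist_eq_dotProduct_sub, ← Matrix.mulVec_sub, hA, hquad,
      EscrY_apply, EscrY_apply, EscrY_apply, hdiag i, hdiag j]
    ring
  refine ⟨fun i => A *ᵥ p i, ⟨⟨fun e he => ?_, fun e he => ?_, fun e he => ?_⟩, A, 0,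
    fun i => (add_zero _).symm⟩, fun hcong => ?_⟩
  · rw [hdist, hyB _ _ he, hyB _ _ (hG.1 _ _ he)]
    ring
  · rw [hdist, sub_le_self_iff]
    exact mul_nonneg (by positivity) (add_nonneg (hyC _ _ he) (hyC _ _ (hG.2.1 _ _ he)))
  · rw [hdist, le_sub_self_iff]
    exact mul_nonpos_of_nonneg_of_nonpos (by positivity)
      (add_nonpos (hyS _ _ he) (hyS _ _ (hG.2.2.1 _ _ he)))
  · obtain ⟨i, j, hij⟩ : ∃ i j, y i j ≠ 0 := by
      simpa [funext_iff] using hy0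
    have hij' := hdist i j
    rw [hcong i j, hyt i j hij, add_zero] at hij'
    exact hij (by nlinarith)

/-- Gale-matrix characterization: there is a framework
affinely-dominated by but not congruent to `(G,p)` iff there are a non-zero `y`
supported on `Ē ∪ C ∪ S` (with the proper signs) and `ξ` with `ℰ(y) Z = e ξᵀ`. -/
theorem statement14 {n r : ℕ}
    (B C S : Set (Fin n × Fin n)) (hG : TensegrityGraph B C S)
    (p : Fin n → Fin r → ℝ)
    (hdim : affineSpan ℝ (Set.range p) = ⊤)
    (hcentroid : ∀ k, ∑ i, p i k = 0)
    (Z : Matrix (Fin n) (Fin (n - r - 1)) ℝ)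
    (hZ : IsGaleMatrix (Matrix.of p) Z) :
    (∃ p' : Fin n → Fin r → ℝ,
        AffinelyDominated B C S p p' ∧ ¬ FrameworkCongruent p p') ↔
      ∃ y : Fin n → Fin n → ℝ, y ≠ 0 ∧
        (∀ i j, y i j ≠ 0 →
          i < j ∧ ((i, j) ∉ B ∪ C ∪ S ∨ (i, j) ∈ C ∨ (i, j) ∈ S)) ∧
        (∀ i j, (i, j) ∈ C → 0 ≤ y i j) ∧
        (∀ i j, (i, j) ∈ S → y i j ≤ 0) ∧
        ∃ ξ : Fin (n - r - 1) → ℝ,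
          EscrY y * Z = Matrix.vecMulVec (fun _ => 1) ξ := by
  exact ⟨fun ⟨_, hdom, hnc⟩ => hdom.exists_isGaleCertificate hZ hnc,
    fun ⟨_, hy⟩ => IsGaleCertificate.exists_affinelyDominated hG hdim hcentroid hZ hy⟩
end
end
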